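/- arXiv:2509.09186 — 5 statements merged into one kernel-verified Lean document; each statement's English description precedes it below -/
import Mathlib

section
/- In an H-field of well-based series with small derivation, for monomials 𝔪, 𝔫 with 𝔫 ≠ 1: 𝔪 is flatter than 𝔫 if and only if 𝔪† ⪯ 𝔫†, where 𝔪† = 𝔪'/𝔪 is the logarithmic derivative. -/
/-- `s ≺ t` relative to the coefficient field `R`. -/
def Prec {T : Type*} [Field T] [LinearOrder T] [IsStrictOrderedRing T] (R : Subfield T) (s t : T) : Prop :=
  ∀ r ∈ R, 0 < r → r * |s| < |t|

/-- `s ⪯ t` (dominance) relative to `R`. -/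
def Dominated {T : Type*} [Field T] [LinearOrder T] [IsStrictOrderedRing T] (R : Subfield T) (s t : T) : Prop :=
  ∃ r ∈ R, 0 < r ∧ |s| ≤ r * |t|

/-- `s ≍ t` relative to `R`. -/
def Asymp {T : Type*} [Field T] [LinearOrder T] [IsStrictOrderedRing T] (R : Subfield T) (s t : T) : Prop :=
  Dominated R s t ∧ Dominated R t s

/-!
Since `𝔪† = (log 𝔪)'`, it suffices that differentiation preserves `⪯` and `≺` towards elements
`t ̸≍ 1`; the reverse implication follows because `s ̸⪯ t` means `t ≺ s`. Both come from the
quantitative H-field property: if `|s| ≤ p |t|` with `p < q` in `R` and `t ̸≍ 1`, then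
`|s'| < q |t'|`. For `t > 0` infinite, `q t ± s` are positive infinite, so `q t' ± s' > 0`;
for `t > 0` infinitesimal, `q t ± s` are positive infinitesimal, so `q t' ± s' < 0`.
-/

theorem map_neg_of_map_add {G H : Type*} [AddGroup G] [AddGroup H] {f : G → H}
    (hf : ∀ a b : G, f (a + b) = f a + f b) (a : G) : f (-a) = -f a :=
  map_neg (AddMonoidHom.mk' f hf) a

theorem deriv_const_mul_add {T : Type*} [Field T] {R : Subfield T} {d : T → T}
    (hd_add : ∀ a b : T, d (a + b) = d a + d b)
    (hd_mul : ∀ a b : T, d (a * b) = d a * b + a * d b)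
    (hd_ker : ∀ a : T, d a = 0 ↔ a ∈ R) {q : T} (hq : q ∈ R) (t x : T) :
    d (q * t + x) = q * d t + d x := by
  rw [hd_add, hd_mul, (hd_ker q).mpr hq, zero_mul, zero_add]

section HField

variable {T : Type*} [Field T] [LinearOrder T] [IsStrictOrderedRing T] {R : Subfield T}

section Dominance

theorem Prec.trans_dominated {a t u : T} (hat : Prec R a t) (htu : Dominated R t u) :
    Prec R a u := by
  obtain ⟨c, hcR, hc, htu⟩ := htu
  intro r hrR hr
  have h := hat (r * c) (mul_mem hrR hcR) (mul_pos hr hc)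
  have h' : c * (r * |a|) < c * |u| := by linarith
  exact lt_of_mul_lt_mul_left h' hc.le

theorem Dominated.trans_prec {u t b : T} (hut : Dominated R u t) (htb : Prec R t b) :
    Prec R u b := by
  obtain ⟨c, hcR, hc, hut⟩ := hut
  intro r hrR hr
  calc r * |u| ≤ r * (c * |t|) := mul_le_mul_of_nonneg_left hut hr.le
    _ = r * c * |t| := by ring
    _ < |b| := htb (r * c) (mul_mem hrR hcR) (mul_pos hr hc)

theorem prec_of_not_dominated {s t : T} (h : ¬ Dominated R s t) : Prec R t s := by
  intro r hrR hr
  by_contra hle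
  exact h ⟨r, hrR, hr, not_lt.mp hle⟩

theorem Dominated.not_prec {s t : T} (hst : Dominated R s t) : ¬ Prec R t s := by
  obtain ⟨r, hrR, hr, hst⟩ := hst
  exact fun hts => (hts r hrR hr).not_ge hst

theorem Prec.ne_zero {s t : T} (h : Prec R s t) : t ≠ 0 := by
  intro ht
  have := h 1 (one_mem R) one_pos
  rw [ht, abs_zero] at this
  exact (abs_nonneg s).not_gt (by linarith)

theorem prec_or_prec_of_not_asymp_one {x : T} (h : ¬ Asymp R x 1) :
    Prec R 1 x ∨ Prec R x 1 := by
  rcases not_and_or.mp h with h | h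
  · exact .inl (prec_of_not_dominated h)
  · exact .inr (prec_of_not_dominated h)

end Dominance

section Derivation

variable {d : T → T}

theorem deriv_pos_of_one_prec (hH : ∀ f : T, (∀ r : T, r ∈ R → r < f) → 0 < d f)
    {u : T} (hu : 0 < u) (h : Prec R 1 u) : 0 < d u := by
  have h1 : 1 < u := by simpa [abs_of_pos hu] using h 1 (one_mem R) one_pos
  refine hH u fun r hrR => ?_
  rcases le_or_gt r 0 with hr | hr
  · linarith
  · simpa [abs_of_pos hu] using h r hrR hr

theorem deriv_neg_of_prec_one (hd_mul : ∀ a b : T, d (a * b) = d a * b + a * d b)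
    (hd_ker : ∀ a : T, d a = 0 ↔ a ∈ R)
    (hH : ∀ f : T, (∀ r : T, r ∈ R → r < f) → 0 < d f)
    {u : T} (hu : 0 < u) (h : Prec R u 1) : d u < 0 := by
  have hinv : 0 < u⁻¹ := inv_pos.mpr hu
  have hinv_inf : Prec R 1 u⁻¹ := by
    intro r hrR hr
    rw [abs_one, mul_one, abs_of_pos hinv, ← mul_one u⁻¹, lt_inv_mul_iff₀' hu]
    simpa [abs_of_pos hu, mul_comm] using h r hrR hr
  have hd_inv := deriv_pos_of_one_prec hH hinv hinv_inf
  have hleibniz : d u * u⁻¹ + u * d u⁻¹ = 0 := by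
    rw [← hd_mul, mul_inv_cancel₀ hu.ne', (hd_ker 1).mpr (one_mem R)]
  have : d u * u⁻¹ < 0 := by nlinarith
  exact neg_of_mul_neg_left this hinv.le

theorem abs_deriv_lt_of_pos (hd_add : ∀ a b : T, d (a + b) = d a + d b)
    (hd_mul : ∀ a b : T, d (a * b) = d a * b + a * d b)
    (hd_ker : ∀ a : T, d a = 0 ↔ a ∈ R)
    (hH : ∀ f : T, (∀ r : T, r ∈ R → r < f) → 0 < d f)
    {s t p q : T} (hpR : p ∈ R) (hqR : q ∈ R) (hp : 0 < p) (hpq : p < q)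
    (ht : 0 < t) (hst : |s| ≤ p * t) (ht1 : Prec R 1 t ∨ Prec R t 1) :
    |d s| < q * |d t| := by
  have hq : 0 < q := hp.trans hpq
  have hbound : ∀ x : T, |x| ≤ p * t → (q - p) * t ≤ q * t + x ∧ q * t + x ≤ (q + p) * t :=
    fun x hx => by constructor <;> linarith [abs_le.mp hx]
  have hpos : ∀ x : T, |x| ≤ p * t → 0 < q * t + x := fun x hx => by
    nlinarith [(hbound x hx).1]
  have hs' : |-s| ≤ p * t := by rwa [abs_neg]
  have hlin := deriv_const_mul_add hd_add hd_mul hd_ker hqR t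
  rcases ht1 with hinf | hsmall
  · have hderiv : ∀ x : T, |x| ≤ p * t → 0 < q * d t + d x := fun x hx => by
      rw [← hlin]
      refine deriv_pos_of_one_prec hH (hpos x hx) (hinf.trans_dominated ?_)
      refine ⟨(q - p)⁻¹, inv_mem (sub_mem hqR hpR), inv_pos.mpr (by linarith), ?_⟩
      rw [abs_of_pos (hpos x hx), abs_of_pos ht, le_inv_mul_iff₀ (by linarith)]
      exact (hbound x hx).1
    have h₁ := hderiv s hst
    have h₂ := hderiv (-s) hs'
    rw [map_neg_of_map_add hd_add] at h₂
    calc |d s| < q * d t := abs_lt.mpr ⟨by linarith, by linarith⟩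
      _ ≤ q * |d t| := mul_le_mul_of_nonneg_left (le_abs_self _) hq.le
  · have hderiv : ∀ x : T, |x| ≤ p * t → q * d t + d x < 0 := fun x hx => by
      rw [← hlin]
      refine deriv_neg_of_prec_one hd_mul hd_ker hH (hpos x hx) (Dominated.trans_prec ?_ hsmall)
      refine ⟨q + p, add_mem hqR hpR, by linarith, ?_⟩
      rw [abs_of_pos (hpos x hx), abs_of_pos ht]
      exact (hbound x hx).2
    have h₁ := hderiv s hst
    have h₂ := hderiv (-s) hs'
    rw [map_neg_of_map_add hd_add] at h₂
    calc |d s| < q * -d t := abs_lt.mpr ⟨by linarith, by linarith⟩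
      _ ≤ q * |d t| := mul_le_mul_of_nonneg_left (neg_le_abs _) hq.le

theorem abs_deriv_lt_of_abs_le_mul (hd_add : ∀ a b : T, d (a + b) = d a + d b)
    (hd_mul : ∀ a b : T, d (a * b) = d a * b + a * d b)
    (hd_ker : ∀ a : T, d a = 0 ↔ a ∈ R)
    (hH : ∀ f : T, (∀ r : T, r ∈ R → r < f) → 0 < d f)
    {s t p q : T} (hpR : p ∈ R) (hqR : q ∈ R) (hp : 0 < p) (hpq : p < q)
    (ht : t ≠ 0) (hst : |s| ≤ p * |t|) (ht1 : Prec R 1 t ∨ Prec R t 1) :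
    |d s| < q * |d t| := by
  rcases ht.lt_or_gt with hneg | hpos
  · have ht1' : Prec R 1 (-t) ∨ Prec R (-t) 1 := by
      simpa only [Prec, abs_neg] using ht1
    have := abs_deriv_lt_of_pos hd_add hd_mul hd_ker hH hpR hqR hp hpq (neg_pos.mpr hneg)
      (by rwa [← abs_of_neg hneg]) ht1'
    rwa [map_neg_of_map_add hd_add, abs_neg] at this
  · exact abs_deriv_lt_of_pos hd_add hd_mul hd_ker hH hpR hqR hp hpq hpos
      (by rwa [← abs_of_pos hpos]) ht1

theorem Dominated.deriv (hd_add : ∀ a b : T, d (a + b) = d a + d b)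
    (hd_mul : ∀ a b : T, d (a * b) = d a * b + a * d b)
    (hd_ker : ∀ a : T, d a = 0 ↔ a ∈ R)
    (hH : ∀ f : T, (∀ r : T, r ∈ R → r < f) → 0 < d f)
    {s t : T} (hst : Dominated R s t) (ht1 : ¬ Asymp R t 1) : Dominated R (d s) (d t) := by
  obtain ⟨r, hrR, hr, hle⟩ := hst
  have hr1R : r + 1 ∈ R := add_mem hrR (one_mem R)
  refine ⟨r + 1, hr1R, by linarith, ?_⟩
  rcases eq_or_ne t 0 with rfl | ht
  · have hs : s = 0 := by simpa using hle
    have hd0 : d 0 = 0 := map_zero (AddMonoidHom.mk' d hd_add)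
    simp [hs, hd0]
  · exact (abs_deriv_lt_of_abs_le_mul hd_add hd_mul hd_ker hH hrR hr1R hr (lt_add_one r) ht hle
      (prec_or_prec_of_not_asymp_one ht1)).le

theorem Prec.deriv (hd_add : ∀ a b : T, d (a + b) = d a + d b)
    (hd_mul : ∀ a b : T, d (a * b) = d a * b + a * d b)
    (hd_ker : ∀ a : T, d a = 0 ↔ a ∈ R)
    (hH : ∀ f : T, (∀ r : T, r ∈ R → r < f) → 0 < d f)
    {s t : T} (hst : Prec R s t) (ht1 : ¬ Asymp R t 1) : Prec R (d s) (d t) := by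
  intro r hrR hr
  have h2rR : 2 * r ∈ R := mul_mem (ofNat_mem R 2) hrR
  have h2r : 0 < 2 * r := by positivity
  have hle : |s| ≤ (2 * r)⁻¹ * |t| := by
    rw [le_inv_mul_iff₀ h2r]
    exact (hst (2 * r) h2rR h2r).le
  have hlt := abs_deriv_lt_of_abs_le_mul hd_add hd_mul hd_ker hH (inv_mem h2rR) (inv_mem hrR)
    (inv_pos.mpr h2r) (inv_strictAnti₀ hr (by linarith)) hst.ne_zero hle
    (prec_or_prec_of_not_asymp_one ht1)
  rwa [← lt_inv_mul_iff₀ hr]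

end Derivation

end HField

theorem flatter_iff_logDeriv_dominated_general (T : Type*) [Field T] [LinearOrder T] [IsStrictOrderedRing T]
    (R : Subfield T) (d : T → T) (log : T → T)
    (hd_add : ∀ a b : T, d (a + b) = d a + d b)
    (hd_mul : ∀ a b : T, d (a * b) = d a * b + a * d b)
    (hd_ker : ∀ a : T, d a = 0 ↔ a ∈ R)
    (hH : ∀ f : T, (∀ r : T, r ∈ R → r < f) → 0 < d f)
    (hd_log : ∀ a : T, 0 < a → a * d (log a) = d a)
    (m n : T) (hm : 0 < m) (hn : 0 < n)
    (hmlog : log m = 0 ∨ ¬ Asymp R (log m) 1)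
    (hnlog : ¬ Asymp R (log n) 1) :
    Dominated R (log m) (log n) ↔ Dominated R (d m / m) (d n / n) := by
  have hlogDeriv : ∀ a : T, 0 < a → d a / a = d (log a) := fun a ha => by
    rw [← hd_log a ha, mul_div_cancel_left₀ _ ha.ne']
  rw [hlogDeriv m hm, hlogDeriv n hn]
  refine ⟨fun h => h.deriv hd_add hd_mul hd_ker hH hnlog, fun h => ?_⟩
  by_contra hnm
  have hprec : Prec R (log n) (log m) := prec_of_not_dominated hnm
  exact h.not_prec (hprec.deriv hd_add hd_mul hd_ker hH (hmlog.resolve_left hprec.ne_zero))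

/-- in a transserial H-field, for monomials `m, n > 0` with
`n ≠ 1` (monomials have purely infinite logarithms, so `log m = 0` or
`log m ̸≍ 1`, and `log n ̸≍ 1`): `m` is flatter than `n`
(`log m ⪯ log n`) iff `m† ⪯ n†`, where `u† = u'/u`. -/
theorem flatter_iff_logDeriv_dominated (T : Type*) [Field T] [LinearOrder T] [IsStrictOrderedRing T]
    (R : Subfield T) (d : T → T) (log : T → T)
    (hd_add : ∀ a b : T, d (a + b) = d a + d b)
    (hd_mul : ∀ a b : T, d (a * b) = d a * b + a * d b)
    (hd_ker : ∀ a : T, d a = 0 ↔ a ∈ R)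
    (hH : ∀ f : T, (∀ r : T, r ∈ R → r < f) → 0 < d f)
    (hlog_mul : ∀ a b : T, 0 < a → 0 < b → log (a * b) = log a + log b)
    (hlog_mono : StrictMonoOn log (Set.Ioi (0 : T)))
    (hd_log : ∀ a : T, 0 < a → a * d (log a) = d a)
    (m n : T) (hm : 0 < m) (hn : 0 < n) (hn1 : n ≠ 1)
    (hmlog : log m = 0 ∨ ¬ Asymp R (log m) 1)
    (hnlog : ¬ Asymp R (log n) 1) :
    Dominated R (log m) (log n) ↔ Dominated R (d m / m) (d n / n) :=
  flatter_iff_logDeriv_dominated_general T R d log hd_add hd_mul hd_ker hH hd_log m n hm hn hmlog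
    hnlog
end

section
/- Strong linearity of integration: in a field of well-based series T with a surjective H-field derivation, the antiderivative operator ∫ : T → T sending f to the unique F with F' = f and 1 ∉ supp F is strongly linear. -/
open HahnSeries Classical

variable {Γ R : Type*}

/-- The natural ordering of a Hahn series field: `s < t` iff the leading
coefficient of `t - s` is positive (Mathlib's convention: support well-ordered
from below). -/
def HahnLt [AddCommGroup Γ] [LinearOrder Γ] [IsOrderedAddMonoid Γ] [Field R] [LinearOrder R] [IsStrictOrderedRing R]
    (s t : HahnSeries Γ R) : Prop := 0 < (t - s).leadingCoeff

/-- A strongly linear map: an `R`-linear map preserving summable families and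
their sums. -/
def StronglyLinearMap [AddCommGroup Γ] [LinearOrder Γ] [IsOrderedAddMonoid Γ] [Field R] [LinearOrder R] [IsStrictOrderedRing R]
    (Φ : HahnSeries Γ R → HahnSeries Γ R) : Prop :=
  (∀ f g : HahnSeries Γ R, Φ (f + g) = Φ f + Φ g) ∧
  (∀ (r : R) (f : HahnSeries Γ R), Φ (r • f) = r • Φ f) ∧
  ∀ (ι : Type) (s : HahnSeries.SummableFamily Γ R ι),
    ∃ t : HahnSeries.SummableFamily Γ R ι,
      (∀ i, t i = Φ (s i)) ∧ t.hsum = Φ s.hsum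


/-! The derivation moves orders monotonically: for `g` without constant term, the order of `d g`
depends only on that of `g`, and strictly increasingly. The H-field axiom gives this through the
classical estimate `b * a' ≺ b'` for `a ≺ 1 ≺ b`, obtained by differentiating the positive
infinite elements `b + r * b * a` for all constants `r`.

A right inverse `I` of `d` normalised by `(I f).coeff 0 = 0` is unique, hence linear. Given a
summable family `f i`, call `γ` good when the truncations of the `I (f i)` to `(-∞, γ]` are
summable. The parts of the `I (f i)` on the bad points have derivatives forming a summable family,
so by monotonicity their orders have a least element `μ`. The truncations at `μ` then differ from
good ones by finitely many monomials at `μ` only, so `μ` is good: there are no bad points. -/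

namespace HahnSeries

section Restrict

variable [PartialOrder Γ]

noncomputable def restrict [Zero R] (S : Set Γ) (f : HahnSeries Γ R) : HahnSeries Γ R where
  coeff γ := if γ ∈ S then f.coeff γ else 0
  isPWO_support' := f.isPWO_support.mono fun γ hγ => by
    by_cases h : γ ∈ S <;> simp_all [Function.mem_support]

@[simp]
theorem coeff_restrict [Zero R] (S : Set Γ) (f : HahnSeries Γ R) (γ : Γ) :
    (restrict S f).coeff γ = if γ ∈ S then f.coeff γ else 0 := rfl

theorem support_restrict [Zero R] (S : Set Γ) (f : HahnSeries Γ R) :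
    (restrict S f).support = f.support ∩ S := by
  ext γ
  by_cases h : γ ∈ S <;> simp [h]

theorem restrict_add [AddMonoid R] (S : Set Γ) (f g : HahnSeries Γ R) :
    restrict S (f + g) = restrict S f + restrict S g := by
  ext γ
  by_cases h : γ ∈ S <;> simp [h]

theorem restrict_add_restrict_compl [AddMonoid R] (S : Set Γ) (f : HahnSeries Γ R) :
    restrict S f + restrict Sᶜ f = f := by
  ext γ
  by_cases h : γ ∈ S <;> simp [h]

end Restrict

section Summable

variable [PartialOrder Γ] [AddCommGroup R] {ι : Type*}

def IsSummableFamily (F : ι → HahnSeries Γ R) : Prop :=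
  (⋃ i, (F i).support).IsPWO ∧ ∀ γ, {i | (F i).coeff γ ≠ 0}.Finite

def IsSummableFamily.toSummableFamily {F : ι → HahnSeries Γ R} (hF : IsSummableFamily F) :
    SummableFamily Γ R ι :=
  ⟨F, hF.1, hF.2⟩

theorem SummableFamily.isSummableFamily (s : SummableFamily Γ R ι) : IsSummableFamily ⇑s :=
  ⟨s.isPWO_iUnion_support, s.finite_co_support⟩

namespace IsSummableFamily

variable {F G : ι → HahnSeries Γ R}

theorem add (hF : IsSummableFamily F) (hG : IsSummableFamily G) : IsSummableFamily (F + G) :=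
  (hF.toSummableFamily + hG.toSummableFamily).isSummableFamily

theorem sub (hF : IsSummableFamily F) (hG : IsSummableFamily G) : IsSummableFamily (F - G) :=
  (hF.toSummableFamily - hG.toSummableFamily).isSummableFamily

theorem restrict (hF : IsSummableFamily F) (S : Set Γ) :
    IsSummableFamily fun i => restrict S (F i) := by
  refine ⟨hF.1.mono (Set.iUnion_mono fun i => ?_), fun γ => (hF.2 γ).subset fun i hi => ?_⟩
  · rw [support_restrict]
    exact Set.inter_subset_left
  · by_cases h : γ ∈ S <;> simp_all

end IsSummableFamily

theorem isSummableFamily_single {γ : Γ} {a : ι → R} (ha : {i | a i ≠ 0}.Finite) :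
    IsSummableFamily fun i => single γ (a i) := by
  refine ⟨(Set.subsingleton_singleton (a := γ)).isPWO.mono ?_, fun γ' => ha.subset ?_⟩
  · exact Set.iUnion_subset fun i => support_single_subset
  · intro i hi
    by_cases h : γ' = γ <;> simp_all

end Summable

section LinearOrder

variable [LinearOrder Γ]

theorem restrict_Iic_eq_single [Zero R] {f : HahnSeries Γ R} {γ : Γ} (h : ↑γ ≤ f.orderTop) :
    restrict (Set.Iic γ) f = single γ (f.coeff γ) := by
  ext γ'
  rcases lt_trichotomy γ' γ with hlt | rfl | hgt
  · simp [hlt.le, hlt.ne, coeff_eq_zero_of_lt_orderTop ((WithTop.coe_lt_coe.2 hlt).trans_le h)]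
  · simp
  · simp [hgt.not_ge, hgt.ne']

variable [AddCommGroup R] {ι : Type*}

def summableUpTo (F : ι → HahnSeries Γ R) : Set Γ :=
  {γ | IsSummableFamily fun i => restrict (Set.Iic γ) (F i)}

variable {F : ι → HahnSeries Γ R}

theorem isSummableFamily_restrict_of_forall_mem {S : Set Γ}
    (hS : ∀ γ ∈ S, IsSummableFamily fun i => restrict (Set.Iic γ) (F i)) :
    IsSummableFamily fun i => restrict S (F i) := by
  refine ⟨?_, fun γ => ?_⟩
  · rw [Set.isPWO_iff_isWF, Set.isWF_iff_no_descending_seq]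
    intro x hx hmem
    have hmem' : ∀ n, ∃ i, x n ∈ (F i).support ∧ x n ∈ S := fun n => by
      simpa [support_restrict] using hmem n
    refine Set.isWF_iff_no_descending_seq.1 (hS _ (hmem' 0).choose_spec.2).1.isWF x hx
      fun n => ?_
    obtain ⟨i, hi, -⟩ := hmem' n
    exact Set.mem_iUnion.2
      ⟨i, by simpa [support_restrict] using ⟨hi, hx.antitone (Nat.zero_le n)⟩⟩
  · by_cases hγ : γ ∈ S
    · exact ((hS γ hγ).2 γ).subset fun i hi => by simp_all
    · simp [hγ]

theorem isSummableFamily_restrict_summableUpTo :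
    IsSummableFamily fun i => restrict (summableUpTo F) (F i) :=
  isSummableFamily_restrict_of_forall_mem fun _ hγ => hγ

theorem mem_summableUpTo_of_le_orderTop {μ : Γ}
    (hle : ∀ i, ↑μ ≤ (restrict (summableUpTo F)ᶜ (F i)).orderTop)
    (hfin : {i | (restrict (summableUpTo F)ᶜ (F i)).coeff μ ≠ 0}.Finite) :
    μ ∈ summableUpTo F := by
  have hsplit : (fun i => restrict (Set.Iic μ) (F i)) =
      (fun i => restrict (Set.Iic μ) (restrict (summableUpTo F) (F i))) +
        fun i => single μ ((restrict (summableUpTo F)ᶜ (F i)).coeff μ) := by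
    funext i
    rw [Pi.add_apply, ← restrict_Iic_eq_single (hle i), ← restrict_add,
      restrict_add_restrict_compl]
  rw [summableUpTo, Set.mem_ofPred_eq, hsplit]
  exact (isSummableFamily_restrict_summableUpTo.restrict _).add (isSummableFamily_single hfin)

end LinearOrder

section OrderedCancel

variable [AddCommMonoid Γ] [LinearOrder Γ] [IsOrderedCancelAddMonoid Γ]
  [Semiring R] [NoZeroDivisors R]

theorem orderTop_mul_lt_orderTop_mul {x y z : HahnSeries Γ R} (hx : x ≠ 0)
    (h : y.orderTop < z.orderTop) : (x * y).orderTop < (x * z).orderTop := by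
  simpa only [orderTop_mul] using WithTop.add_lt_add_left (orderTop_ne_top.2 hx) h

theorem orderTop_lt_orderTop_mul {x y : HahnSeries Γ R} (hx : x ≠ 0) (hy : 0 < y.orderTop) :
    x.orderTop < (x * y).orderTop := by
  simpa [orderTop_mul] using WithTop.add_lt_add_left (orderTop_ne_top.2 hx) hy

theorem orderTop_smul_of_ne_zero {r : R} (hr : r ≠ 0) (x : HahnSeries Γ R) :
    (r • x).orderTop = x.orderTop := by
  rw [← C_mul_eq_smul, orderTop_mul, C_apply, orderTop_single hr, WithTop.coe_zero, zero_add]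

theorem leadingCoeff_smul (r : R) (x : HahnSeries Γ R) :
    (r • x).leadingCoeff = r * x.leadingCoeff := by
  rw [← C_mul_eq_smul, leadingCoeff_mul, C_apply, leadingCoeff_of_single]

end OrderedCancel

theorem orderTop_inv_lt_zero [AddCommGroup Γ] [LinearOrder Γ] [IsOrderedAddMonoid Γ] [Field R]
    {x : HahnSeries Γ R} (hx0 : x ≠ 0) (hx : 0 < x.orderTop) : x⁻¹.orderTop < 0 := by
  obtain ⟨γ, hγ⟩ := WithTop.ne_top_iff_exists.1 (orderTop_ne_top.2 (inv_ne_zero hx0))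
  obtain ⟨δ, hδ⟩ := WithTop.ne_top_iff_exists.1 (orderTop_ne_top.2 hx0)
  have hsum : γ + δ = 0 := by
    rw [← WithTop.coe_eq_zero, WithTop.coe_add, hγ, hδ, ← orderTop_mul, inv_mul_cancel₀ hx0,
      orderTop_one]
  rw [← hδ, WithTop.coe_pos] at hx
  rw [← hγ, WithTop.coe_lt_zero, eq_neg_of_add_eq_zero_left hsum]
  exact neg_lt_zero.2 hx

theorem orderTop_lt_of_forall_leadingCoeff_pos [Zero Γ] [LinearOrder Γ]
    [Field R] [LinearOrder R] [IsStrictOrderedRing R] {u w : HahnSeries Γ R}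
    (h : ∀ r : R, 0 < (u + r • w).leadingCoeff) : u.orderTop < w.orderTop := by
  by_contra! hle
  have hw : w ≠ 0 := by
    rintro rfl
    rw [orderTop_zero, top_le_iff, orderTop_eq_top] at hle
    simpa [hle] using h 0
  have hδ : w.orderTop = w.order := (order_eq_orderTop_of_ne_zero hw).symm
  set r := -(1 + u.coeff w.order) / w.leadingCoeff
  have hv : (u + r • w).coeff w.order = -1 := by
    have := leadingCoeff_ne_zero.2 hw
    simp only [coeff_add, coeff_smul, smul_eq_mul, r, ← leadingCoeff_eq]
    field_simp
    ring
  have hv0 : u + r • w ≠ 0 := ne_zero_of_coeff_ne_zero (g := w.order) (by rw [hv]; norm_num)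
  have hvorder : (u + r • w).order = w.order := by
    refine le_antisymm (order_le_of_coeff_ne_zero (by rw [hv]; norm_num)) (not_lt.1 fun hlt => ?_)
    refine coeff_order_eq_zero.not.2 hv0 ?_
    rw [coeff_add, coeff_smul, coeff_eq_zero_of_lt_order hlt, smul_zero, add_zero]
    exact coeff_eq_zero_of_lt_orderTop ((WithTop.coe_lt_coe.2 hlt).trans_le (hδ ▸ hle))
  have := h r
  rw [leadingCoeff_eq, hvorder, hv] at this
  norm_num at this

section HDerivation

variable [AddCommGroup Γ] [LinearOrder Γ] [IsOrderedAddMonoid Γ]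
  [Field R] [LinearOrder R] [IsStrictOrderedRing R]

theorem _root_.StronglyLinearMap.isSummableFamily_comp
    {Φ : HahnSeries Γ R → HahnSeries Γ R} (hΦ : StronglyLinearMap Φ) {ι : Type}
    {F : ι → HahnSeries Γ R} (hF : IsSummableFamily F) :
    IsSummableFamily fun i => Φ (F i) := by
  obtain ⟨t, ht, -⟩ := hΦ.2.2 ι hF.toSummableFamily
  exact funext ht ▸ t.isSummableFamily

structure IsHDerivation (d : HahnSeries Γ R → HahnSeries Γ R) : Prop where
  map_add : ∀ f g, d (f + g) = d f + d g
  map_smul : ∀ (r : R) f, d (r • f) = r • d f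
  leibniz : ∀ f g, d (f * g) = d f * g + f * d g
  ker : ∀ f, d f = 0 ↔ ∃ r : R, f = C r
  pos : ∀ f, (∀ r : R, HahnLt (C r) f) → HahnLt 0 (d f)

namespace IsHDerivation

variable {d : HahnSeries Γ R → HahnSeries Γ R} (hd : IsHDerivation d)
include hd

theorem map_neg (f : HahnSeries Γ R) : d (-f) = -d f :=
  (AddMonoidHom.mk' d hd.map_add).map_neg f

theorem map_sub (f g : HahnSeries Γ R) : d (f - g) = d f - d g :=
  (AddMonoidHom.mk' d hd.map_add).map_sub f g

theorem map_one : d 1 = 0 :=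
  (hd.ker 1).2 ⟨1, C_one.symm⟩

theorem map_ne_zero {f : HahnSeries Γ R} (hf : f ≠ 0) (hf0 : f.orderTop ≠ 0) : d f ≠ 0 := by
  intro h
  obtain ⟨r, rfl⟩ := (hd.ker f).1 h
  have hr : r ≠ 0 := by
    rintro rfl
    exact hf C_zero
  exact hf0 (by rw [C_apply, orderTop_single hr, WithTop.coe_zero])

theorem leadingCoeff_map_pos {f : HahnSeries Γ R} (hf : f.orderTop < 0)
    (hlc : 0 < f.leadingCoeff) : 0 < (d f).leadingCoeff := by
  have hC : ∀ r : R, f.orderTop < (C r).orderTop := fun r =>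
    hf.trans_le (by simpa [C_apply] using orderTop_single_le (a := (0 : Γ)) (r := r))
  simpa [HahnLt] using hd.pos f fun r => by rwa [HahnLt, leadingCoeff_sub (hC r)]

theorem orderTop_map_lt_orderTop_mul_map {a b : HahnSeries Γ R} (hb : b.orderTop < 0)
    (ha : 0 < a.orderTop) : (d b).orderTop < (b * d a).orderTop := by
  have hb0 : b ≠ 0 := orderTop_ne_top.1 hb.ne_top
  wlog hpos : 0 < b.leadingCoeff generalizing b
  · have hneg : 0 < (-b).leadingCoeff := by
      rw [leadingCoeff_neg, neg_pos]
      exact lt_of_le_of_ne (not_lt.1 hpos) (leadingCoeff_ne_zero.2 hb0)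
    simpa [hd.map_neg, orderTop_neg] using
      this (by rwa [orderTop_neg]) (neg_ne_zero.2 hb0) hneg
  have hdb0 : d b ≠ 0 := leadingCoeff_ne_zero.1 (hd.leadingCoeff_map_pos hb hpos).ne'
  -- `b + r • (b * a)` is positive infinite for every constant `r`, so its derivative is positive
  have hperturb : ∀ r : R, 0 < (d b + r • (d b * a + b * d a)).leadingCoeff := by
    intro r
    have hsmall : b.orderTop < (r • (b * a)).orderTop :=
      (orderTop_lt_orderTop_mul hb0 ha).trans_le (orderTop_le_orderTop_smul r _)
    have := hd.leadingCoeff_map_pos (f := b + r • (b * a))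
      (by rwa [orderTop_add_eq_left hsmall]) (by rwa [leadingCoeff_add_eq_left hsmall])
    rwa [hd.map_add, hd.map_smul, hd.leibniz] at this
  have hneg : (d b).orderTop < (-(d b * a)).orderTop := by
    rw [orderTop_neg]
    exact orderTop_lt_orderTop_mul hdb0 ha
  calc (d b).orderTop
      < min (d b * a + b * d a).orderTop (-(d b * a)).orderTop :=
        lt_min (orderTop_lt_of_forall_leadingCoeff_pos hperturb) hneg
    _ ≤ (d b * a + b * d a + -(d b * a)).orderTop := min_orderTop_le_orderTop_add
    _ = (b * d a).orderTop := by congr 1; ring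

theorem mul_self_mul_map_inv {g : HahnSeries Γ R} (hg : g ≠ 0) : g * g * d g⁻¹ = -d g := by
  have h := hd.leibniz g g⁻¹
  rw [mul_inv_cancel₀ hg, hd.map_one] at h
  linear_combination -g * h - d g * mul_inv_cancel₀ hg

theorem orderTop_map_lt_orderTop_map {g h : HahnSeries Γ R} (hg : g.orderTop ≠ 0)
    (hgh : g.orderTop < h.orderTop) : (d g).orderTop < (d h).orderTop := by
  have hg0 : g ≠ 0 := orderTop_ne_top.1 hgh.ne_top
  have hdg : d g ≠ 0 := hd.map_ne_zero hg0 hg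
  obtain ⟨c, hc⟩ : ∃ c, h = c * g := ⟨h * g⁻¹, (inv_mul_cancel_right₀ hg0 h).symm⟩
  have hcpos : 0 < c.orderTop := by
    by_contra! hle
    refine hgh.not_ge ?_
    rw [hc, orderTop_mul]
    simpa [add_comm] using add_le_add_right hle g.orderTop
  have hgdc : (d g).orderTop < (g * d c).orderTop := by
    rcases lt_or_gt_of_ne hg with hneg | hpos
    · exact hd.orderTop_map_lt_orderTop_mul_map hneg hcpos
    · -- for infinitesimal `g` apply the infinite case to `g⁻¹` and multiply by `g ^ 2`
      have := orderTop_mul_lt_orderTop_mul (mul_ne_zero hg0 hg0)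
        (hd.orderTop_map_lt_orderTop_mul_map (orderTop_inv_lt_zero hg0 hpos) hcpos)
      rwa [hd.mul_self_mul_map_inv hg0, orderTop_neg, mul_assoc, mul_inv_cancel_left₀ hg0] at this
  have hcdg : (d g).orderTop < (c * d g).orderTop := by
    rw [mul_comm]
    exact orderTop_lt_orderTop_mul hdg hcpos
  calc (d g).orderTop
      < min (g * d c).orderTop (c * d g).orderTop := lt_min hgdc hcdg
    _ ≤ (g * d c + c * d g).orderTop := min_orderTop_le_orderTop_add
    _ = (d h).orderTop := by rw [hc, hd.leibniz, mul_comm (d c)]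

theorem orderTop_map_eq_orderTop_map {g h : HahnSeries Γ R} (hg : g.orderTop ≠ 0)
    (hgh : g.orderTop = h.orderTop) : (d g).orderTop = (d h).orderTop := by
  rcases eq_or_ne g 0 with rfl | hg0
  · rw [orderTop_zero, eq_comm, orderTop_eq_top] at hgh
    rw [hgh]
  have hh0 : h ≠ 0 := orderTop_ne_top.1 (hgh ▸ orderTop_ne_top.2 hg0)
  set r := h.leadingCoeff / g.leadingCoeff
  have hr : r ≠ 0 := div_ne_zero (leadingCoeff_ne_zero.2 hh0) (leadingCoeff_ne_zero.2 hg0)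
  have hrg : (r • g).orderTop = g.orderTop := orderTop_smul_of_ne_zero hr g
  have hγ : g.orderTop = g.order := (order_eq_orderTop_of_ne_zero hg0).symm
  have hrest : (r • g).orderTop < (h - r • g).orderTop := by
    have hne : (h - r • g).orderTop ≠ g.order := orderTop_sub_ne (hgh ▸ hγ) (hrg.trans hγ)
      (by rw [leadingCoeff_smul, div_mul_cancel₀ _ (leadingCoeff_ne_zero.2 hg0)])
    refine lt_of_le_of_ne ?_ (hrg.trans hγ ▸ hne.symm)
    simpa [hrg, hgh] using min_orderTop_le_orderTop_sub (x := h) (y := r • g)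
  calc (d g).orderTop = (d (r • g)).orderTop := by
        rw [hd.map_smul, orderTop_smul_of_ne_zero hr]
    _ = (d (r • g) + d (h - r • g)).orderTop :=
        (orderTop_add_eq_left (hd.orderTop_map_lt_orderTop_map (hrg ▸ hg) hrest)).symm
    _ = (d h).orderTop := by rw [← hd.map_add, add_sub_cancel]

theorem eq_of_map_eq {f g : HahnSeries Γ R} (h : d f = d g) (hf : f.coeff 0 = 0)
    (hg : g.coeff 0 = 0) : f = g := by
  obtain ⟨r, hr⟩ := (hd.ker (f - g)).1 (by rw [hd.map_sub, h, sub_self])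
  have hr0 : 0 = r := by simpa [hf, hg, C_apply] using congr_arg (coeff · 0) hr
  rwa [← hr0, C_zero, sub_eq_zero] at hr

theorem exists_least_order_of_isSummableFamily_map {ι : Type*} {T : ι → HahnSeries Γ R}
    (hT0 : ∀ i, (T i).coeff 0 = 0) (hdT : IsSummableFamily fun i => d (T i))
    (hT : ∃ i, T i ≠ 0) :
    ∃ μ : Γ, (∀ i, ↑μ ≤ (T i).orderTop) ∧ {i | (T i).coeff μ ≠ 0}.Finite ∧
      ∃ i, (T i).coeff μ ≠ 0 := by
  have hT0' : ∀ i, (T i).orderTop ≠ 0 := fun i => orderTop_ne_of_coeff_eq_zero (hT0 i)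
  have hWF : {i | T i ≠ 0}.WellFoundedOn fun i j => (d (T i)).orderTop < (d (T j)).orderTop := by
    refine Set.wellFoundedOn_image.1 ((hdT.1.image_of_monotone WithTop.coe_mono).isWF.mono ?_)
    rintro _ ⟨i, hi, rfl⟩
    have hdi : d (T i) ≠ 0 := hd.map_ne_zero hi (hT0' i)
    exact ⟨_, Set.mem_iUnion.2 ⟨i, coeff_order_eq_zero.not.2 hdi⟩,
      order_eq_orderTop_of_ne_zero hdi⟩
  obtain ⟨i₀, hi₀, hmin⟩ := (Set.wellFoundedOn_iff.1 hWF).has_min {i | T i ≠ 0} hT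
  have hle : ∀ i, (T i₀).orderTop ≤ (T i).orderTop := fun i => by
    by_contra! hlt
    have hi : T i ≠ 0 := orderTop_ne_top.1 hlt.ne_top
    exact hmin i hi ⟨hd.orderTop_map_lt_orderTop_map (hT0' i) hlt, hi, hi₀⟩
  have hμ : (T i₀).orderTop = (T i₀).order := (order_eq_orderTop_of_ne_zero hi₀).symm
  have hdi₀ : d (T i₀) ≠ 0 := hd.map_ne_zero hi₀ (hT0' i₀)
  refine ⟨(T i₀).order, hμ ▸ hle, (hdT.2 (d (T i₀)).order).subset fun i hi => ?_,
    i₀, coeff_orderTop_ne hμ⟩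
  have hTi : (T i).orderTop = (T i₀).orderTop :=
    le_antisymm (hμ ▸ orderTop_le_of_coeff_ne_zero hi) (hle i)
  exact coeff_orderTop_ne ((hd.orderTop_map_eq_orderTop_map (hT0' i) hTi).trans
    (order_eq_orderTop_of_ne_zero hdi₀).symm)

theorem isSummableFamily_of_map (hds : StronglyLinearMap d) {ι : Type} {F : ι → HahnSeries Γ R}
    (hF0 : ∀ i, (F i).coeff 0 = 0) (hdF : IsSummableFamily fun i => d (F i)) :
    IsSummableFamily F := by
  set T := fun i => restrict (summableUpTo F)ᶜ (F i)
  have hFT : ∀ i, restrict (summableUpTo F) (F i) + T i = F i := fun i =>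
    restrict_add_restrict_compl _ (F i)
  have hdT : IsSummableFamily fun i => d (T i) := by
    convert hdF.sub (hds.isSummableFamily_comp isSummableFamily_restrict_summableUpTo) using 1
    funext i
    have hdFi := congr_arg d (hFT i)
    rw [hd.map_add] at hdFi
    rw [Pi.sub_apply, ← hdFi, add_sub_cancel_left]
  suffices hT : ∀ i, T i = 0 by
    have hF : ∀ i, restrict (summableUpTo F) (F i) = F i := fun i => by simpa [hT i] using hFT i
    simpa only [hF] using isSummableFamily_restrict_summableUpTo (F := F)
  by_contra! hT
  obtain ⟨μ, hle, hfin, i, hi⟩ :=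
    hd.exists_least_order_of_isSummableFamily_map (fun i => by simp [T, hF0]) hdT hT
  have hμ : μ ∉ summableUpTo F := fun h => hi (by simp [T, h])
  exact hμ (mem_summableUpTo_of_le_orderTop hle hfin)

end IsHDerivation

end HDerivation

end HahnSeries

/-- in a field of well-based series `T = R[[Γ]]` with a
surjective, strongly linear H-field derivation `d` (kernel the constants,
positive on positive infinite elements), the antiderivative operator
`∫ : T → T` sending `f` to the unique `F` with `d F = f` and `0 ∉ supp F`
exists and is strongly linear. -/
theorem integration_strongly_linear [AddCommGroup Γ] [LinearOrder Γ] [IsOrderedAddMonoid Γ]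
    [Field R] [LinearOrder R] [IsStrictOrderedRing R]
    (d : HahnSeries Γ R → HahnSeries Γ R)
    (hd_strong : StronglyLinearMap d)
    (hd_leib : ∀ f g : HahnSeries Γ R, d (f * g) = d f * g + f * d g)
    (hd_surj : Function.Surjective d)
    (hd_ker : ∀ f : HahnSeries Γ R, d f = 0 ↔ ∃ r : R, f = HahnSeries.C r)
    (hH : ∀ f : HahnSeries Γ R,
      (∀ r : R, HahnLt (HahnSeries.C r) f) → HahnLt 0 (d f)) :
    ∃ I : HahnSeries Γ R → HahnSeries Γ R,
      (∀ f, d (I f) = f ∧ (I f).coeff 0 = 0) ∧ StronglyLinearMap I := by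
  have hd : IsHDerivation d := ⟨hd_strong.1, hd_strong.2.1, hd_leib, hd_ker, hH⟩
  choose F hF using hd_surj
  set I := fun f => F f - C ((F f).coeff 0)
  have hdI : ∀ f, d (I f) = f := fun f => by
    rw [hd.map_sub, (hd_ker _).2 ⟨_, rfl⟩, sub_zero, hF]
  have hI0 : ∀ f, (I f).coeff 0 = 0 := fun f => by simp [I, C_apply]
  refine ⟨I, fun f => ⟨hdI f, hI0 f⟩, fun f g => ?_, fun r f => ?_, fun ι s => ?_⟩
  · exact hd.eq_of_map_eq (by rw [hdI, hd.map_add, hdI, hdI]) (hI0 _) (by simp [hI0])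
  · exact hd.eq_of_map_eq (by rw [hdI, hd.map_smul, hdI]) (hI0 _) (by simp [hI0])
  have hIs : IsSummableFamily fun i => I (s i) :=
    hd.isSummableFamily_of_map hd_strong (fun i => hI0 _) (by simpa [hdI] using s.isSummableFamily)
  obtain ⟨t, ht, hsum⟩ := hd_strong.2.2 ι hIs.toSummableFamily
  have hts : t = s := SummableFamily.ext fun i => (ht i).trans (hdI _)
  refine ⟨hIs.toSummableFamily, fun i => rfl, hd.eq_of_map_eq ?_ ?_ (hI0 _)⟩
  · rw [← hsum, hts, hdI]
  · simp [SummableFamily.coeff_hsum, IsSummableFamily.toSummableFamily, hI0]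
end

section
/- Asymptotic preservation under definite integration: for f, g ∈ T^× and s ≠ t in T^{>,≻}, f ≺ g implies ∫_s^t f ≺ ∫_s^t g, and f ∼ g implies ∫_s^t f ∼ ∫_s^t g. -/
/-- `s` is positive infinite: `s > R`. -/
def PosInf {T : Type*} [Field T] [LinearOrder T] [IsStrictOrderedRing T] (R : Subfield T) (s : T) : Prop :=
  ∀ r ∈ R, r < s

section Prec

variable {T : Type*} [Field T] [LinearOrder T] [IsStrictOrderedRing T] {R : Subfield T}

theorem PosInf.pos {s : T} (hs : PosInf R s) : 0 < s :=
  hs 0 R.zero_mem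

theorem eq_zero_of_abs_lt_inv_of_posInf {y m : T} (hy : y ∈ R) (hm : PosInf R m)
    (h : |y| < m⁻¹) : y = 0 := by
  by_contra hne
  have habs : |y| ∈ R := by
    rcases abs_choice y with e | e <;> rw [e]
    exacts [hy, R.neg_mem hy]
  exact (hm _ (R.inv_mem habs)).not_gt ((lt_inv_comm₀ (abs_pos.2 hne) hm.pos).1 h)

theorem prec_neg_neg {a b : T} : Prec R (-a) (-b) ↔ Prec R a b := by
  simp only [Prec, abs_neg]

theorem Prec.map_of_pos {J : T →ₗ[R] T} (hJ : ∀ a, 0 < a → 0 < J a) {a b : T}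
    (h : Prec R a b) : Prec R (J a) (J b) := by
  intro r hr r0
  let ρ : R := ⟨r, hr⟩
  have hρ : ∀ y, ρ • y = r * y := fun _ => rfl
  have hra : -|b| < r * a ∧ r * a < |b| := by
    rw [← abs_lt, abs_mul, abs_of_pos r0]
    exact h r hr r0
  have plus : 0 < J |b| + r * J a := by
    have := hJ (|b| + ρ • a) (by rw [hρ]; linarith)
    rwa [map_add, map_smul, hρ] at this
  have minus : 0 < J |b| - r * J a := by
    have := hJ (|b| - ρ • a) (by rw [hρ]; linarith)
    rwa [map_sub, map_smul, hρ] at this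
  have hJb : |J b| = J |b| := by
    rcases abs_choice b with e | e <;> rw [e] at plus minus ⊢
    · exact abs_of_pos (by linarith)
    · rw [map_neg] at plus minus ⊢
      exact abs_of_neg (by linarith)
  rw [hJb, ← abs_of_pos r0, ← abs_mul, abs_lt]
  constructor <;> linarith

end Prec

/-- `comp f s` stands for `f ∘ s`; its laws are only imposed at positive infinite `s`. -/
structure IntegrationAxioms (T : Type*) [Field T] [LinearOrder T] [IsStrictOrderedRing T]
    (R : Subfield T) where
  d : Derivation ℤ T T
  d_eq_zero_iff : ∀ a, d a = 0 ↔ a ∈ R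
  d_pos_of_posInf : ∀ a, PosInf R a → 0 < d a
  integral : T → T
  d_integral : ∀ f, d (integral f) = f
  x : T
  posInf_x : PosInf R x
  comp : T → T → T
  comp_add : ∀ f g s, PosInf R s → comp (f + g) s = comp f s + comp g s
  comp_mul : ∀ f g s, PosInf R s → comp (f * g) s = comp f s * comp g s
  comp_id_left : ∀ s, PosInf R s → comp x s = s
  comp_id_right : ∀ f, comp f x = f
  d_comp : ∀ f s, PosInf R s → d (comp f s) = d s * comp (d f) s
  strictMonoOn_comp : ∀ f, 0 < d f → StrictMonoOn (comp f) {s | PosInf R s}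

namespace IntegrationAxioms

variable {T : Type*} [Field T] [LinearOrder T] [IsStrictOrderedRing T] {R : Subfield T}
  (S : IntegrationAxioms T R) {c s t u v : T}

theorem d_eq_zero (hc : c ∈ R) : S.d c = 0 :=
  (S.d_eq_zero_iff c).2 hc

theorem comp_one (hu : PosInf R u) : S.comp 1 u = 1 := by
  have h := S.comp_mul S.x 1 u hu
  rw [mul_one, S.comp_id_left u hu] at h
  exact mul_left_cancel₀ hu.pos.ne' (h.symm.trans (mul_one u).symm)

def compRingHom (hu : PosInf R u) : T →+* T :=
  RingHom.mk' ⟨⟨(S.comp · u), S.comp_one hu⟩, fun f g => S.comp_mul f g u hu⟩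
    fun f g => S.comp_add f g u hu

theorem comp_zero (hu : PosInf R u) : S.comp 0 u = 0 :=
  map_zero (S.compRingHom hu)

theorem comp_neg (hu : PosInf R u) (f : T) : S.comp (-f) u = -S.comp f u :=
  map_neg (S.compRingHom hu) f

theorem comp_sub (hu : PosInf R u) (f g : T) : S.comp (f - g) u = S.comp f u - S.comp g u :=
  map_sub (S.compRingHom hu) f g

theorem comp_inv (hu : PosInf R u) (f : T) : S.comp f⁻¹ u = (S.comp f u)⁻¹ :=
  map_inv₀ (S.compRingHom hu) f

theorem comp_mem (hc : c ∈ R) (hu : PosInf R u) : S.comp c u ∈ R := by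
  rw [← S.d_eq_zero_iff, S.d_comp c u hu, S.d_eq_zero hc, S.comp_zero hu, mul_zero]

theorem d_sub_inv_x_pos (hc : c ∈ R) : 0 < S.d (c - S.x⁻¹) := by
  rw [map_sub, Derivation.leibniz_inv, S.d_eq_zero hc, smul_eq_mul, zero_sub, neg_mul, neg_neg]
  exact mul_pos (pow_pos (inv_pos.2 S.posInf_x.pos) 2) (S.d_pos_of_posInf _ S.posInf_x)

theorem comp_sub_inv_lt (hc : c ∈ R) (hu : PosInf R u) (hv : PosInf R v) (huv : u < v) :
    S.comp c u - u⁻¹ < S.comp c v - v⁻¹ := by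
  have h := S.strictMonoOn_comp _ (S.d_sub_inv_x_pos hc) hu hv huv
  rwa [S.comp_sub hu, S.comp_sub hv, S.comp_inv hu, S.comp_inv hv, S.comp_id_left u hu,
    S.comp_id_left v hv] at h

theorem abs_comp_sub_comp_lt (hc : c ∈ R) (hu : PosInf R u) (hv : PosInf R v) (huv : u < v) :
    |S.comp c u - S.comp c v| < u⁻¹ := by
  have h₁ := S.comp_sub_inv_lt hc hu hv huv
  have h₂ := S.comp_sub_inv_lt (R.neg_mem hc) hu hv huv
  rw [S.comp_neg hu, S.comp_neg hv] at h₂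
  have := inv_pos.2 hv.pos
  rw [abs_sub_lt_iff]
  constructor <;> linarith

theorem comp_const (hc : c ∈ R) (hu : PosInf R u) : S.comp c u = c := by
  have hx := S.posInf_x
  suffices S.comp c u = S.comp c S.x by rwa [S.comp_id_right] at this
  rcases lt_trichotomy u S.x with h | rfl | h
  · exact sub_eq_zero.1 <| eq_zero_of_abs_lt_inv_of_posInf
      (R.sub_mem (S.comp_mem hc hu) (S.comp_mem hc hx)) hu (S.abs_comp_sub_comp_lt hc hu hx h)
  · rfl
  · exact (sub_eq_zero.1 <| eq_zero_of_abs_lt_inv_of_posInf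
      (R.sub_mem (S.comp_mem hc hx) (S.comp_mem hc hu)) hx (S.abs_comp_sub_comp_lt hc hx hu h)).symm

theorem comp_sub_comp_eq_of_d_eq {a b : T} (h : S.d a = S.d b) (hu : PosInf R u)
    (hv : PosInf R v) : S.comp a v - S.comp a u = S.comp b v - S.comp b u := by
  have hc : a - b ∈ R := by rw [← S.d_eq_zero_iff, map_sub, h, sub_self]
  have e : ∀ w, PosInf R w → S.comp a w = S.comp b w + (a - b) := fun w hw => by
    rw [← S.comp_const hc hw, ← S.comp_add _ _ _ hw, add_sub_cancel]
  rw [e u hu, e v hv]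
  ring

def defInt (hs : PosInf R s) (ht : PosInf R t) : T →ₗ[R] T where
  toFun f := S.comp (S.integral f) t - S.comp (S.integral f) s
  map_add' f g := by
    rw [S.comp_sub_comp_eq_of_d_eq (b := S.integral f + S.integral g)
      (by rw [map_add, S.d_integral, S.d_integral, S.d_integral]) hs ht,
      S.comp_add _ _ _ hs, S.comp_add _ _ _ ht]
    ring
  map_smul' r f := by
    rw [S.comp_sub_comp_eq_of_d_eq (b := r * S.integral f)
      (by rw [Derivation.leibniz, S.d_eq_zero r.2, S.d_integral, S.d_integral, smul_zero,
        add_zero, smul_eq_mul]; rfl) hs ht,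
      S.comp_mul _ _ _ hs, S.comp_mul _ _ _ ht, S.comp_const r.2 hs, S.comp_const r.2 ht]
    simp only [RingHom.id_apply, Subfield.smul_def, smul_eq_mul]
    ring

theorem defInt_apply (hs : PosInf R s) (ht : PosInf R t) (f : T) :
    S.defInt hs ht f = S.comp (S.integral f) t - S.comp (S.integral f) s :=
  rfl

theorem defInt_swap (hs : PosInf R s) (ht : PosInf R t) (f : T) :
    S.defInt ht hs f = -S.defInt hs ht f := by
  rw [defInt_apply, defInt_apply, neg_sub]

theorem defInt_pos (hs : PosInf R s) (ht : PosInf R t) (hst : s < t) {f : T} (hf : 0 < f) :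
    0 < S.defInt hs ht f :=
  sub_pos.2 (S.strictMonoOn_comp _ (by rwa [S.d_integral]) hs ht hst)

theorem prec_defInt (hs : PosInf R s) (ht : PosInf R t) (hst : s ≠ t) {a b : T}
    (h : Prec R a b) : Prec R (S.defInt hs ht a) (S.defInt hs ht b) := by
  rcases hst.lt_or_gt with hlt | hgt
  · exact h.map_of_pos fun _ => S.defInt_pos hs ht hlt
  · rw [← prec_neg_neg, ← S.defInt_swap, ← S.defInt_swap]
    exact h.map_of_pos fun _ => S.defInt_pos ht hs hgt

end IntegrationAxioms

theorem integral_preserves_asymptotics_general (T : Type*) [Field T] [LinearOrder T] [IsStrictOrderedRing T]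
    (R : Subfield T) (d : T → T) (comp : T → T → T) (x : T) (Int : T → T)
    (hd_add : ∀ a b : T, d (a + b) = d a + d b)
    (hd_mul : ∀ a b : T, d (a * b) = d a * b + a * d b)
    (hd_ker : ∀ a : T, d a = 0 ↔ a ∈ R)
    (hH : ∀ f : T, PosInf R f → 0 < d f)
    (hx : PosInf R x)
    (comp_add : ∀ f g s : T, PosInf R s → comp (f + g) s = comp f s + comp g s)
    (comp_mul : ∀ f g s : T, PosInf R s → comp (f * g) s = comp f s * comp g s)
    (comp_id_left : ∀ s : T, PosInf R s → comp x s = s)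
    (comp_id_right : ∀ f : T, comp f x = f)
    (chain_rule : ∀ f s : T, PosInf R s → d (comp f s) = d s * comp (d f) s)
    (hmono : ∀ f : T, f ∉ (R : Set T) → ∀ s t : T, PosInf R s → PosInf R t →
      s < t → (0 < d f → comp f s < comp f t) ∧ (d f < 0 → comp f t < comp f s))
    (hInt : ∀ f : T, d (Int f) = f)
    (f g s t : T)
    (hs : PosInf R s) (ht : PosInf R t) (hst : s ≠ t) :
    (Prec R f g →
      Prec R (comp (Int f) t - comp (Int f) s) (comp (Int g) t - comp (Int g) s)) ∧
    (Prec R (f - g) f →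
      Prec R ((comp (Int f) t - comp (Int f) s) - (comp (Int g) t - comp (Int g) s))
        (comp (Int f) t - comp (Int f) s)) := by
  let S : IntegrationAxioms T R :=
    { d := Derivation.mk' (AddMonoidHom.mk' d hd_add).toIntLinearMap fun a b => by
        simp only [AddMonoidHom.coe_toIntLinearMap, AddMonoidHom.mk'_apply, hd_mul, smul_eq_mul]
        ring
      d_eq_zero_iff := hd_ker
      d_pos_of_posInf := hH
      integral := Int
      d_integral := hInt
      x := x
      posInf_x := hx
      comp := comp
      comp_add := comp_add
      comp_mul := comp_mul
      comp_id_left := comp_id_left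
      comp_id_right := comp_id_right
      d_comp := chain_rule
      strictMonoOn_comp := fun f hf s hs t ht hst =>
        (hmono f (fun hR => hf.ne' ((hd_ker f).2 hR)) s t hs ht hst).1 hf }
  refine ⟨S.prec_defInt hs ht hst, fun h => ?_⟩
  have := S.prec_defInt hs ht hst h
  rwa [map_sub] at this

/-- asymptotic relations are preserved by definite integration:
for `f, g ≠ 0` and positive infinite `s ≠ t`, `f ≺ g` implies
`∫_s^t f ≺ ∫_s^t g`, and `f ∼ g` implies `∫_s^t f ∼ ∫_s^t g`,
where `∫_s^t f := (∫f)∘t − (∫f)∘s`. -/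
theorem integral_preserves_asymptotics (T : Type*) [Field T] [LinearOrder T] [IsStrictOrderedRing T]
    (R : Subfield T) (d : T → T) (comp : T → T → T) (x : T) (Int : T → T)
    (hd_add : ∀ a b : T, d (a + b) = d a + d b)
    (hd_mul : ∀ a b : T, d (a * b) = d a * b + a * d b)
    (hd_ker : ∀ a : T, d a = 0 ↔ a ∈ R)
    (hH : ∀ f : T, PosInf R f → 0 < d f)
    (hx : PosInf R x)
    (comp_add : ∀ f g s : T, PosInf R s → comp (f + g) s = comp f s + comp g s)
    (comp_mul : ∀ f g s : T, PosInf R s → comp (f * g) s = comp f s * comp g s)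
    (comp_strictMono_left : ∀ s : T, PosInf R s → StrictMono (fun f => comp f s))
    (comp_id_left : ∀ s : T, PosInf R s → comp x s = s)
    (comp_id_right : ∀ f : T, comp f x = f)
    (chain_rule : ∀ f s : T, PosInf R s → d (comp f s) = d s * comp (d f) s)
    (hmono : ∀ f : T, f ∉ (R : Set T) → ∀ s t : T, PosInf R s → PosInf R t →
      s < t → (0 < d f → comp f s < comp f t) ∧ (d f < 0 → comp f t < comp f s))
    (hInt : ∀ f : T, d (Int f) = f)
    (f g s t : T) (hf : f ≠ 0) (hg : g ≠ 0)
    (hs : PosInf R s) (ht : PosInf R t) (hst : s ≠ t) :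
    (Prec R f g →
      Prec R (comp (Int f) t - comp (Int f) s) (comp (Int g) t - comp (Int g) s)) ∧
    (Prec R (f - g) f →
      Prec R ((comp (Int f) t - comp (Int f) s) - (comp (Int g) t - comp (Int g) s))
        (comp (Int f) t - comp (Int f) s)) :=
  integral_preserves_asymptotics_general T R d comp x Int hd_add hd_mul hd_ker hH hx comp_add
    comp_mul comp_id_left comp_id_right chain_rule hmono hInt f g s t hs ht hst
end

section
/- Uniqueness of Abel functions up to an additive constant: if V∘h = V + 1 and U∘h = U + 1 with U, V ∈ S^{>,≻}, then V = U + r₀ for some r₀ ∈ R. -/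
section Composition

variable {T : Type*} [Field T] [LinearOrder T] [IsStrictOrderedRing T] {R : Subfield T}
  {comp : T → T → T} {x : T}

theorem PosInf.add_of_nonneg {s c : T} (hs : PosInf R s) (hc : 0 ≤ c) : PosInf R (s + c) :=
  fun r hr => (hs r hr).trans_le (le_add_of_nonneg_right hc)

theorem comp_id_add_const
    (comp_add : ∀ f g s : T, PosInf R s → comp (f + g) s = comp f s + comp g s)
    (comp_const : ∀ r : T, r ∈ R → ∀ s : T, PosInf R s → comp r s = r)
    (comp_id_left : ∀ s : T, PosInf R s → comp x s = s)
    {r s : T} (hr : r ∈ R) (hs : PosInf R s) : comp (x + r) s = s + r := by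
  rw [comp_add x r s hs, comp_id_left s hs, comp_const r hr s hs]

theorem comp_right_cancel
    (comp_id_right : ∀ f : T, comp f x = f)
    (comp_assoc : ∀ f g s : T, PosInf R g → PosInf R s →
      comp (comp f g) s = comp f (comp g s))
    {V W : T} (hV : PosInf R V) (hW : PosInf R W) (hVW : comp V W = x)
    {A B : T} (hAB : comp A V = comp B V) : A = B := by
  calc A = comp (comp A V) W := by rw [comp_assoc A V W hV hW, hVW, comp_id_right]
    _ = comp (comp B V) W := by rw [hAB]
    _ = B := by rw [comp_assoc B V W hV hW, hVW, comp_id_right]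

theorem comp_add_one_comm_of_abel
    (comp_add : ∀ f g s : T, PosInf R s → comp (f + g) s = comp f s + comp g s)
    (comp_const : ∀ r : T, r ∈ R → ∀ s : T, PosInf R s → comp r s = r)
    (comp_id_left : ∀ s : T, PosInf R s → comp x s = s)
    (comp_id_right : ∀ f : T, comp f x = f)
    (comp_assoc : ∀ f g s : T, PosInf R g → PosInf R s →
      comp (comp f g) s = comp f (comp g s))
    (hx : PosInf R x) {h U V W g : T} (hh : PosInf R h) (hU : PosInf R U) (hV : PosInf R V)
    (hW : PosInf R W) (hVW : comp V W = x) (hg : PosInf R g) (hgV : comp g V = U)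
    (hUabel : comp U h = U + 1) (hVabel : comp V h = V + 1) :
    comp g (x + 1) = comp (x + 1) g := by
  have hx1 : PosInf R (x + 1) := hx.add_of_nonneg zero_le_one
  have translate := fun {s : T} (hs : PosInf R s) =>
    comp_id_add_const comp_add comp_const comp_id_left R.one_mem hs
  refine comp_right_cancel comp_id_right comp_assoc hV hW hVW ?_
  calc comp (comp g (x + 1)) V = comp g (comp V h) := by
        rw [comp_assoc g (x + 1) V hx1 hV, translate hV, hVabel]
    _ = U + 1 := by rw [← comp_assoc g V h hV hh, hgV, hUabel]
    _ = comp (comp (x + 1) g) V := by rw [comp_assoc (x + 1) g V hg hV, hgV, translate hU]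

end Composition

theorem abel_function_unique_up_to_constant_general (T : Type*) [Field T] [LinearOrder T] [IsStrictOrderedRing T]
    (R : Subfield T) (comp : T → T → T) (x : T)
    (hx : PosInf R x)
    (comp_add : ∀ f g s : T, PosInf R s → comp (f + g) s = comp f s + comp g s)
    (comp_const : ∀ r : T, r ∈ R → ∀ s : T, PosInf R s → comp r s = r)
    (comp_id_left : ∀ s : T, PosInf R s → comp x s = s)
    (comp_id_right : ∀ f : T, comp f x = f)
    (comp_assoc : ∀ f g s : T, PosInf R g → PosInf R s →
      comp (comp f g) s = comp f (comp g s))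
    (comp_posinf : ∀ f s : T, PosInf R f → PosInf R s → PosInf R (comp f s))
    -- the group structure: existence of compositional inverses
    (hinv : ∀ f : T, PosInf R f → ∃ g : T, PosInf R g ∧
      comp f g = x ∧ comp g f = x)
    -- the centralizer of x + 1 equals x + R (previous result)
    (hC : ∀ g : T, PosInf R g → comp g (x + 1) = comp (x + 1) g →
      ∃ r : T, r ∈ R ∧ g = x + r)
    (h U V : T) (hh : PosInf R h)
    (hU : PosInf R U) (hV : PosInf R V)
    (hUabel : comp U h = U + 1) (hVabel : comp V h = V + 1) :
    ∃ r₀ : T, r₀ ∈ R ∧ V = U + r₀ := by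
  obtain ⟨W, hW, hVW, hWV⟩ := hinv V hV
  have hgV : comp (comp U W) V = U := by rw [comp_assoc U W V hW hV, hWV, comp_id_right]
  have hg : PosInf R (comp U W) := comp_posinf U W hU hW
  obtain ⟨r, hr, hgr⟩ := hC _ hg <| comp_add_one_comm_of_abel comp_add comp_const comp_id_left
    comp_id_right comp_assoc hx hh hU hV hW hVW hg hgV hUabel hVabel
  have hUV : U = V + r := by
    rw [← hgV, hgr, comp_id_add_const comp_add comp_const comp_id_left hr hV]
  exact ⟨-r, R.neg_mem hr, by rw [hUV]; ring⟩

/-- uniqueness of Abel functions up to an additive constant: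
if `V∘h = V + 1` and `U∘h = U + 1` in the group `(S^{>,≻}, ∘, x)`, then
`V = U + r₀` for some constant `r₀ ∈ R`.  The centralizer of `x + 1` being
`x + R` is a hypothesis (previous result). -/
theorem abel_function_unique_up_to_constant (T : Type*) [Field T] [LinearOrder T] [IsStrictOrderedRing T]
    (R : Subfield T) (comp : T → T → T) (x : T)
    (hx : PosInf R x)
    (comp_add : ∀ f g s : T, PosInf R s → comp (f + g) s = comp f s + comp g s)
    (comp_const : ∀ r : T, r ∈ R → ∀ s : T, PosInf R s → comp r s = r)
    (comp_id_left : ∀ s : T, PosInf R s → comp x s = s)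
    (comp_id_right : ∀ f : T, comp f x = f)
    (comp_assoc : ∀ f g s : T, PosInf R g → PosInf R s →
      comp (comp f g) s = comp f (comp g s))
    (comp_posinf : ∀ f s : T, PosInf R f → PosInf R s → PosInf R (comp f s))
    -- the group structure: existence of compositional inverses
    (hinv : ∀ f : T, PosInf R f → ∃ g : T, PosInf R g ∧
      comp f g = x ∧ comp g f = x)
    -- the centralizer of x + 1 equals x + R (previous result)
    (hC : ∀ g : T, PosInf R g → comp g (x + 1) = comp (x + 1) g →
      ∃ r : T, r ∈ R ∧ g = x + r)
    (h U V : T) (hh : PosInf R h) (hhx : x < h)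
    (hU : PosInf R U) (hV : PosInf R V)
    (hUabel : comp U h = U + 1) (hVabel : comp V h = V + 1) :
    ∃ r₀ : T, r₀ ∈ R ∧ V = U + r₀ :=
  abel_function_unique_up_to_constant_general T R comp x hx comp_add comp_const comp_id_left
    comp_id_right comp_assoc comp_posinf hinv hC h U V hh hU hV hUabel hVabel
end

section
/- Fractional iteration gives an ordered group isomorphism: for h ≠ x in S^{>,≻}, the map r ↦ h^[r] := V^inv∘(V + r) (for any V with V∘h = V + 1) is an isomorphism of ordered groups from (R, +, 0, <) onto the centralizer (C(h), ∘, x, <), with h^[1] = h; moreover (h^[r₀])^[r₁] = h^[r₀·r₁]. -/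
/-- The fractional iterate `h^[r] := V⁻ⁱⁿᵛ ∘ (V + r)` of a series `h` with
Abel function `V` (i.e. `V∘h = V + 1`). -/
def iterOf {T : Type*} (comp : T → T → T) [Add T] (Vinv V r : T) : T :=
  comp Vinv (V + r)

/-!
An Abel function `V` of `h` conjugates `h` to the translation `x + 1`, so it conjugates the
centralizer of `h` onto the centralizer `x + R` of `x + 1`. Concretely: if `g` commutes with
`h` then `V ∘ g` is again an Abel function of `h`, and any two Abel functions differ by a
constant; hence `V ∘ g = V + r` and `g = h^[r]`. The same uniqueness applied to the Abel
function `V / r₀` of `h^[r₀]` gives `(h^[r₀])^[r₁] = h^[r₀ r₁]`.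
-/

section PosInf

variable {T : Type*} [Field T] [LinearOrder T] [IsStrictOrderedRing T] {R : Subfield T} {s r : T}

theorem PosInf.add_of_mem (hs : PosInf R s) (hr : r ∈ R) : PosInf R (s + r) := fun q hq => by
  linarith [hs (q - r) (R.sub_mem hq hr)]

theorem PosInf.mul_of_mem (hs : PosInf R s) (hr : r ∈ R) (hr_pos : 0 < r) :
    PosInf R (r * s) := fun q hq => by
  have := mul_lt_mul_of_pos_left (hs (r⁻¹ * q) (R.mul_mem (R.inv_mem hr) hq)) hr_pos
  rwa [mul_inv_cancel_left₀ hr_pos.ne'] at this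

end PosInf

/-- `comp f s` stands for `f ∘ s`. -/
structure IsSeriesComposition {T : Type*} [Field T] [LinearOrder T] [IsStrictOrderedRing T]
    (R : Subfield T) (comp : T → T → T) (x : T) : Prop where
  posInf_id : PosInf R x
  add_comp : ∀ f g s : T, PosInf R s → comp (f + g) s = comp f s + comp g s
  mul_comp : ∀ f g s : T, PosInf R s → comp (f * g) s = comp f s * comp g s
  const_comp : ∀ r ∈ R, ∀ s : T, PosInf R s → comp r s = r
  id_comp : ∀ s : T, PosInf R s → comp x s = s
  comp_id : ∀ f : T, comp f x = f
  comp_assoc : ∀ f g s : T, PosInf R g → PosInf R s → comp (comp f g) s = comp f (comp g s)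
  posInf_comp : ∀ f s : T, PosInf R f → PosInf R s → PosInf R (comp f s)
  comp_lt_comp : ∀ g s t : T, PosInf R g → PosInf R s → PosInf R t → s < t →
    comp g s < comp g t

structure IsCompInverse {T : Type*} [Field T] [LinearOrder T] [IsStrictOrderedRing T]
    (R : Subfield T) (comp : T → T → T) (x V Vinv : T) : Prop where
  posInf : PosInf R V
  posInf_inv : PosInf R Vinv
  comp_inv : comp V Vinv = x
  inv_comp : comp Vinv V = x

namespace IsSeriesComposition

variable {T : Type*} [Field T] [LinearOrder T] [IsStrictOrderedRing T] {R : Subfield T}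
  {comp : T → T → T} {x V Vinv f g h U s r r₀ r₁ : T}

theorem add_const_comp (S : IsSeriesComposition R comp x) (hr : r ∈ R) (hs : PosInf R s) :
    comp (f + r) s = comp f s + r := by
  rw [S.add_comp f r s hs, S.const_comp r hr s hs]

theorem const_mul_comp (S : IsSeriesComposition R comp x) (hr : r ∈ R) (hs : PosInf R s) :
    comp (r * f) s = r * comp f s := by
  rw [S.mul_comp r f s hs, S.const_comp r hr s hs]

theorem posInf_iterOf (S : IsSeriesComposition R comp x) (hV : IsCompInverse R comp x V Vinv)
    (hr : r ∈ R) : PosInf R (iterOf comp Vinv V r) :=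
  S.posInf_comp _ _ hV.posInf_inv (hV.posInf.add_of_mem hr)

theorem comp_iterOf (S : IsSeriesComposition R comp x) (hV : IsCompInverse R comp x V Vinv)
    (hr : r ∈ R) : comp V (iterOf comp Vinv V r) = V + r := by
  have hVr := hV.posInf.add_of_mem hr
  rw [iterOf, ← S.comp_assoc V Vinv _ hV.posInf_inv hVr, hV.comp_inv, S.id_comp _ hVr]

theorem iterOf_eq_of_comp_eq (S : IsSeriesComposition R comp x)
    (hV : IsCompInverse R comp x V Vinv) (hg : PosInf R g) (hVg : comp V g = V + r) :
    iterOf comp Vinv V r = g := by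
  rw [iterOf, ← hVg, ← S.comp_assoc Vinv V g hV.posInf hg, hV.inv_comp, S.id_comp g hg]

theorem iterOf_zero (hV : IsCompInverse R comp x V Vinv) : iterOf comp Vinv V 0 = x := by
  rw [iterOf, add_zero, hV.inv_comp]

theorem iterOf_one (S : IsSeriesComposition R comp x) (hV : IsCompInverse R comp x V Vinv)
    (hh : PosInf R h) (hVh : comp V h = V + 1) : iterOf comp Vinv V 1 = h :=
  S.iterOf_eq_of_comp_eq hV hh hVh

theorem iterOf_add (S : IsSeriesComposition R comp x) (hV : IsCompInverse R comp x V Vinv)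
    (hr₀ : r₀ ∈ R) (hr₁ : r₁ ∈ R) :
    iterOf comp Vinv V (r₀ + r₁) = comp (iterOf comp Vinv V r₀) (iterOf comp Vinv V r₁) := by
  have hpos₁ := S.posInf_iterOf hV hr₁
  refine S.iterOf_eq_of_comp_eq hV (S.posInf_comp _ _ (S.posInf_iterOf hV hr₀) hpos₁) ?_
  rw [← S.comp_assoc _ _ _ (S.posInf_iterOf hV hr₀) hpos₁, S.comp_iterOf hV hr₀,
    S.add_const_comp hr₀ hpos₁, S.comp_iterOf hV hr₁]
  ring

theorem iterOf_lt_iterOf (S : IsSeriesComposition R comp x) (hV : IsCompInverse R comp x V Vinv)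
    (hr₀ : r₀ ∈ R) (hr₁ : r₁ ∈ R) (hlt : r₀ < r₁) :
    iterOf comp Vinv V r₀ < iterOf comp Vinv V r₁ :=
  S.comp_lt_comp _ _ _ hV.posInf_inv (hV.posInf.add_of_mem hr₀) (hV.posInf.add_of_mem hr₁)
    (by linarith)

theorem comp_iterOf_comm (S : IsSeriesComposition R comp x) (hV : IsCompInverse R comp x V Vinv)
    (hh : PosInf R h) (hVh : comp V h = V + 1) (hr : r ∈ R) :
    comp (iterOf comp Vinv V r) h = comp h (iterOf comp Vinv V r) := by
  rw [← S.iterOf_one hV hh hVh, ← S.iterOf_add hV hr R.one_mem, ← S.iterOf_add hV R.one_mem hr,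
    add_comm]

theorem exists_eq_add_const_of_abel (S : IsSeriesComposition R comp x)
    (hC : ∀ g : T, PosInf R g → comp g (x + 1) = comp (x + 1) g → ∃ r : T, r ∈ R ∧ g = x + r)
    (hV : IsCompInverse R comp x V Vinv) (hh : PosInf R h) (hVh : comp V h = V + 1)
    (hU : PosInf R U) (hUh : comp U h = U + 1) : ∃ c ∈ R, U = V + c := by
  have hVinv := hV.posInf_inv
  have hhVinv := S.posInf_comp h Vinv hh hVinv
  have hD := S.posInf_comp U Vinv hU hVinv
  have hx1 : PosInf R (x + 1) := S.posInf_id.add_of_mem R.one_mem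
  have hconj : comp Vinv (x + 1) = comp h Vinv := by
    rw [← hV.comp_inv, ← S.add_const_comp R.one_mem hVinv, ← hVh, S.comp_assoc V h Vinv hh hVinv,
      ← S.comp_assoc Vinv V _ hV.posInf hhVinv, hV.inv_comp, S.id_comp _ hhVinv]
  have hDcomm : comp (comp U Vinv) (x + 1) = comp (x + 1) (comp U Vinv) := by
    rw [S.comp_assoc U Vinv _ hVinv hx1, hconj, ← S.comp_assoc U h Vinv hh hVinv, hUh,
      S.add_const_comp R.one_mem hVinv, S.add_const_comp R.one_mem hD, S.id_comp _ hD]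
  obtain ⟨c, hc, hDc⟩ := hC _ hD hDcomm
  refine ⟨c, hc, ?_⟩
  calc U = comp (comp U Vinv) V := by
        rw [S.comp_assoc U Vinv V hVinv hV.posInf, hV.inv_comp, S.comp_id]
    _ = V + c := by rw [hDc, S.add_const_comp hc hV.posInf, S.id_comp V hV.posInf]

theorem exists_iterOf_eq_of_comm (S : IsSeriesComposition R comp x)
    (hC : ∀ g : T, PosInf R g → comp g (x + 1) = comp (x + 1) g → ∃ r : T, r ∈ R ∧ g = x + r)
    (hV : IsCompInverse R comp x V Vinv) (hh : PosInf R h) (hVh : comp V h = V + 1)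
    (hg : PosInf R g) (hgh : comp g h = comp h g) : ∃ r ∈ R, g = iterOf comp Vinv V r := by
  have hVg_abel : comp (comp V g) h = comp V g + 1 := by
    rw [S.comp_assoc V g h hg hh, hgh, ← S.comp_assoc V h g hh hg, hVh,
      S.add_const_comp R.one_mem hg]
  obtain ⟨r, hr, hVg⟩ :=
    S.exists_eq_add_const_of_abel hC hV hh hVh (S.posInf_comp V g hV.posInf hg) hVg_abel
  exact ⟨r, hr, (S.iterOf_eq_of_comp_eq hV hg hVg).symm⟩

theorem pos_of_abel_iterOf (S : IsSeriesComposition R comp x)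
    (hV : IsCompInverse R comp x V Vinv) (hr₀ : r₀ ∈ R) (hU : PosInf R U)
    (hUk : comp U (iterOf comp Vinv V r₀) = U + 1) : 0 < r₀ := by
  by_contra! hle
  obtain hlt | rfl := hle.lt_or_eq
  · have := S.comp_lt_comp U _ _ hU (S.posInf_iterOf hV hr₀) S.posInf_id
      (iterOf_zero hV ▸ S.iterOf_lt_iterOf hV hr₀ R.zero_mem hlt)
    rw [hUk, S.comp_id] at this
    linarith
  · rw [iterOf_zero hV, S.comp_id] at hUk
    linarith

theorem isCompInverse_const_mul (S : IsSeriesComposition R comp x)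
    (hV : IsCompInverse R comp x V Vinv) (hr : r ∈ R) (hr_pos : 0 < r) :
    IsCompInverse R comp x (r⁻¹ * V) (comp Vinv (r * x)) := by
  have hrx := S.posInf_id.mul_of_mem hr hr_pos
  have hrV := hV.posInf.mul_of_mem (R.inv_mem hr) (inv_pos.mpr hr_pos)
  have hVinv_rx := S.posInf_comp Vinv _ hV.posInf_inv hrx
  refine ⟨hrV, hVinv_rx, ?_, ?_⟩
  · rw [S.const_mul_comp (R.inv_mem hr) hVinv_rx, ← S.comp_assoc V Vinv _ hV.posInf_inv hrx,
      hV.comp_inv, S.id_comp _ hrx, inv_mul_cancel_left₀ hr_pos.ne']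
  · rw [S.comp_assoc Vinv _ _ hrx hrV, S.const_mul_comp hr hrV, S.id_comp _ hrV,
      mul_inv_cancel_left₀ hr_pos.ne', hV.inv_comp]

theorem iterOf_iterOf (S : IsSeriesComposition R comp x)
    (hC : ∀ g : T, PosInf R g → comp g (x + 1) = comp (x + 1) g → ∃ r : T, r ∈ R ∧ g = x + r)
    (hV : IsCompInverse R comp x V Vinv) (hr₀ : r₀ ∈ R) (hr₁ : r₁ ∈ R)
    (hU : IsCompInverse R comp x U Uinv) (hUk : comp U (iterOf comp Vinv V r₀) = U + 1) :
    iterOf comp Uinv U r₁ = iterOf comp Vinv V (r₀ * r₁) := by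
  have hr₀_pos := S.pos_of_abel_iterOf hV hr₀ hU.posInf hUk
  have hW := S.isCompInverse_const_mul hV hr₀ hr₀_pos
  have hiter₀ := S.posInf_iterOf hV hr₀
  have hW_abel : comp (r₀⁻¹ * V) (iterOf comp Vinv V r₀) = r₀⁻¹ * V + 1 := by
    rw [S.const_mul_comp (R.inv_mem hr₀) hiter₀, S.comp_iterOf hV hr₀, mul_add,
      inv_mul_cancel₀ hr₀_pos.ne']
  obtain ⟨c, hc, rfl⟩ := S.exists_eq_add_const_of_abel hC hW hiter₀ hW_abel hU.posInf hUk
  have hr₀r₁ := R.mul_mem hr₀ hr₁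
  refine S.iterOf_eq_of_comp_eq hU (S.posInf_iterOf hV hr₀r₁) ?_
  rw [S.add_const_comp hc (S.posInf_iterOf hV hr₀r₁),
    S.const_mul_comp (R.inv_mem hr₀) (S.posInf_iterOf hV hr₀r₁), S.comp_iterOf hV hr₀r₁, mul_add,
    inv_mul_cancel_left₀ hr₀_pos.ne']
  ring

end IsSeriesComposition

theorem fractional_iteration_iso_general (T : Type*) [Field T] [LinearOrder T] [IsStrictOrderedRing T]
    (R : Subfield T) (comp : T → T → T) (x : T)
    (hx : PosInf R x)
    (comp_add : ∀ f g s : T, PosInf R s → comp (f + g) s = comp f s + comp g s)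
    (comp_mul : ∀ f g s : T, PosInf R s → comp (f * g) s = comp f s * comp g s)
    (comp_const : ∀ r : T, r ∈ R → ∀ s : T, PosInf R s → comp r s = r)
    (comp_id_left : ∀ s : T, PosInf R s → comp x s = s)
    (comp_id_right : ∀ f : T, comp f x = f)
    (comp_assoc : ∀ f g s : T, PosInf R g → PosInf R s →
      comp (comp f g) s = comp f (comp g s))
    (comp_posinf : ∀ f s : T, PosInf R f → PosInf R s → PosInf R (comp f s))
    -- monotonicity: composition with a positive infinite series on the left
    (comp_strictMono_right : ∀ g s t : T, PosInf R g → PosInf R s → PosInf R t →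
      s < t → comp g s < comp g t)
    -- the centralizer of x + 1 equals x + R (previous result)
    (hC : ∀ g : T, PosInf R g → comp g (x + 1) = comp (x + 1) g →
      ∃ r : T, r ∈ R ∧ g = x + r)
    (h V Vinv : T) (hh : PosInf R h)
    (hV : PosInf R V) (hVabel : comp V h = V + 1)
    (hVinv : PosInf R Vinv) (hVVinv : comp V Vinv = x) (hVinvV : comp Vinv V = x) :
    -- h^[1] = h
    iterOf comp Vinv V 1 = h ∧
    -- each h^[r] lies in the centralizer of h
    (∀ r : T, r ∈ R → PosInf R (iterOf comp Vinv V r) ∧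
      comp (iterOf comp Vinv V r) h = comp h (iterOf comp Vinv V r)) ∧
    -- every element of the centralizer of h is some h^[r]
    (∀ g : T, PosInf R g → comp g h = comp h g →
      ∃ r : T, r ∈ R ∧ g = iterOf comp Vinv V r) ∧
    -- group morphism: h^[r₀ + r₁] = h^[r₀] ∘ h^[r₁]
    (∀ r₀ : T, r₀ ∈ R → ∀ r₁ : T, r₁ ∈ R →
      iterOf comp Vinv V (r₀ + r₁) =
        comp (iterOf comp Vinv V r₀) (iterOf comp Vinv V r₁)) ∧
    -- strictly increasing
    (∀ r₀ : T, r₀ ∈ R → ∀ r₁ : T, r₁ ∈ R → r₀ < r₁ →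
      iterOf comp Vinv V r₀ < iterOf comp Vinv V r₁) ∧
    -- iteration law: (h^[r₀])^[r₁] = h^[r₀·r₁]
    (∀ r₀ : T, r₀ ∈ R → ∀ r₁ : T, r₁ ∈ R → ∀ U Uinv : T,
      PosInf R U → comp U (iterOf comp Vinv V r₀) = U + 1 →
      PosInf R Uinv → comp U Uinv = x → comp Uinv U = x →
      iterOf comp Uinv U r₁ = iterOf comp Vinv V (r₀ * r₁)) := by
  have S : IsSeriesComposition R comp x :=
    ⟨hx, comp_add, comp_mul, comp_const, comp_id_left, comp_id_right, comp_assoc, comp_posinf,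
      comp_strictMono_right⟩
  have hVpair : IsCompInverse R comp x V Vinv := ⟨hV, hVinv, hVVinv, hVinvV⟩
  refine ⟨S.iterOf_one hVpair hh hVabel,
    fun r hr => ⟨S.posInf_iterOf hVpair hr, S.comp_iterOf_comm hVpair hh hVabel hr⟩,
    fun g hg hgh => S.exists_iterOf_eq_of_comm hC hVpair hh hVabel hg hgh,
    fun r₀ hr₀ r₁ hr₁ => S.iterOf_add hVpair hr₀ hr₁,
    fun r₀ hr₀ r₁ hr₁ => S.iterOf_lt_iterOf hVpair hr₀ hr₁,
    fun r₀ hr₀ r₁ hr₁ U Uinv hU hUk hUinv hUUinv hUinvU =>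
      S.iterOf_iterOf hC hVpair hr₀ hr₁ ⟨hU, hUinv, hUUinv, hUinvU⟩ hUk⟩

/-- fractional iteration gives an ordered-group isomorphism:
for `h > x` with Abel function `V` (any two such differ by a constant, so
`h^[r] := Vinv∘(V + r)` is well defined), the map `r ↦ h^[r]` is an
isomorphism of ordered groups from `(R, +, 0, <)` onto the centralizer
`(C(h), ∘, x, <)`, with `h^[1] = h`; moreover `(h^[r₀])^[r₁] = h^[r₀·r₁]`
(phrased via any Abel function `U` of `h^[r₀]`). -/
theorem fractional_iteration_iso (T : Type*) [Field T] [LinearOrder T] [IsStrictOrderedRing T]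
    (R : Subfield T) (comp : T → T → T) (x : T)
    (hx : PosInf R x)
    (comp_add : ∀ f g s : T, PosInf R s → comp (f + g) s = comp f s + comp g s)
    (comp_mul : ∀ f g s : T, PosInf R s → comp (f * g) s = comp f s * comp g s)
    (comp_const : ∀ r : T, r ∈ R → ∀ s : T, PosInf R s → comp r s = r)
    (comp_id_left : ∀ s : T, PosInf R s → comp x s = s)
    (comp_id_right : ∀ f : T, comp f x = f)
    (comp_assoc : ∀ f g s : T, PosInf R g → PosInf R s →
      comp (comp f g) s = comp f (comp g s))
    (comp_posinf : ∀ f s : T, PosInf R f → PosInf R s → PosInf R (comp f s))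
    (comp_strictMono_left : ∀ s : T, PosInf R s → StrictMono (fun f => comp f s))
    -- monotonicity: composition with a positive infinite series on the left
    (comp_strictMono_right : ∀ g s t : T, PosInf R g → PosInf R s → PosInf R t →
      s < t → comp g s < comp g t)
    -- the centralizer of x + 1 equals x + R (previous result)
    (hC : ∀ g : T, PosInf R g → comp g (x + 1) = comp (x + 1) g →
      ∃ r : T, r ∈ R ∧ g = x + r)
    (h V Vinv : T) (hh : PosInf R h) (hhx : x < h)
    (hV : PosInf R V) (hVabel : comp V h = V + 1)
    (hVinv : PosInf R Vinv) (hVVinv : comp V Vinv = x) (hVinvV : comp Vinv V = x) :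
    -- h^[1] = h
    iterOf comp Vinv V 1 = h ∧
    -- each h^[r] lies in the centralizer of h
    (∀ r : T, r ∈ R → PosInf R (iterOf comp Vinv V r) ∧
      comp (iterOf comp Vinv V r) h = comp h (iterOf comp Vinv V r)) ∧
    -- every element of the centralizer of h is some h^[r]
    (∀ g : T, PosInf R g → comp g h = comp h g →
      ∃ r : T, r ∈ R ∧ g = iterOf comp Vinv V r) ∧
    -- group morphism: h^[r₀ + r₁] = h^[r₀] ∘ h^[r₁]
    (∀ r₀ : T, r₀ ∈ R → ∀ r₁ : T, r₁ ∈ R →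
      iterOf comp Vinv V (r₀ + r₁) =
        comp (iterOf comp Vinv V r₀) (iterOf comp Vinv V r₁)) ∧
    -- strictly increasing
    (∀ r₀ : T, r₀ ∈ R → ∀ r₁ : T, r₁ ∈ R → r₀ < r₁ →
      iterOf comp Vinv V r₀ < iterOf comp Vinv V r₁) ∧
    -- iteration law: (h^[r₀])^[r₁] = h^[r₀·r₁]
    (∀ r₀ : T, r₀ ∈ R → ∀ r₁ : T, r₁ ∈ R → ∀ U Uinv : T,
      PosInf R U → comp U (iterOf comp Vinv V r₀) = U + 1 →
      PosInf R Uinv → comp U Uinv = x → comp Uinv U = x →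
      iterOf comp Uinv U r₁ = iterOf comp Vinv V (r₀ * r₁)) :=
  fractional_iteration_iso_general T R comp x hx comp_add comp_mul comp_const comp_id_left
    comp_id_right comp_assoc comp_posinf comp_strictMono_right hC h V Vinv hh hV hVabel hVinv hVVinv
    hVinvV
end
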